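/- arXiv:2502.16387 — 8 statements merged into one kernel-verified Lean document; each statement's English description precedes it below -/
import Mathlib

section
/- A loss function ℓ : [0,1] × {0,1} → ℝ is proper (i.e., p·ℓ(p,1) + (1−p)·ℓ(p,0) ≤ p·ℓ(p',1) + (1−p)·ℓ(p',0) for all p, p' ∈ [0,1]) if and only if there exist a concave function f : [0,1] → ℝ and a function g : [0,1] → ℝ such that g(p) is a supergradient of f at p (that is, f(x) ≤ f(p) + g(p)·(x − p) for all x, p ∈ [0,1]) and ℓ(p,y) = f(p) + g(p)·(y − p) for all p ∈ [0,1] and y ∈ {0,1}; moreover in this case f(p) = p·ℓ(p,1) + (1−p)·ℓ(p,0) is the univariate form of ℓ. -/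
/-- **Characterization of proper losses (Gneiting–Raftery).**
A loss `ℓ : [0,1] × {0,1} → ℝ` is proper iff there exist a concave `f : [0,1] → ℝ`
and a supergradient selection `g` of `f` such that `ℓ(p,y) = f(p) + g(p)·(y − p)`;
moreover in this case `f` is the univariate form `f(p) = p·ℓ(p,1) + (1−p)·ℓ(p,0)`. -/
theorem proper_loss_characterization (ℓ : ℝ → ℝ → ℝ) :
    (∀ p ∈ Set.Icc (0:ℝ) 1, ∀ p' ∈ Set.Icc (0:ℝ) 1,
        p * ℓ p 1 + (1 - p) * ℓ p 0 ≤ p * ℓ p' 1 + (1 - p) * ℓ p' 0)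
    ↔ (∃ f g : ℝ → ℝ,
        ConcaveOn ℝ (Set.Icc (0:ℝ) 1) f ∧
        (∀ p ∈ Set.Icc (0:ℝ) 1, ∀ x ∈ Set.Icc (0:ℝ) 1, f x ≤ f p + g p * (x - p)) ∧
        (∀ p ∈ Set.Icc (0:ℝ) 1, ∀ y ∈ ({0, 1} : Set ℝ), ℓ p y = f p + g p * (y - p)) ∧
        (∀ p ∈ Set.Icc (0:ℝ) 1, f p = p * ℓ p 1 + (1 - p) * ℓ p 0)) := by
  constructor
  · intro h
    set f : ℝ → ℝ := fun p => p * ℓ p 1 + (1 - p) * ℓ p 0 with hf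
    set g : ℝ → ℝ := fun p => ℓ p 1 - ℓ p 0 with hg
    have key : ∀ p ∈ Set.Icc (0:ℝ) 1, ∀ x ∈ Set.Icc (0:ℝ) 1,
        f x ≤ f p + g p * (x - p) := by
      intro p hp x hx
      have := h x hx p hp
      simp only [hf, hg]
      nlinarith [this]
    refine ⟨f, g, ?_, key, ?_, fun p _ => rfl⟩
    · refine ⟨convex_Icc 0 1, ?_⟩
      intro u hu v hv a b ha hb hab
      have hz : a • u + b • v ∈ Set.Icc (0:ℝ) 1 := (convex_Icc 0 1) hu hv ha hb hab
      have h1 := key _ hz u hu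
      have h2 := key _ hz v hv
      obtain rfl : b = 1 - a := by linarith
      have := add_le_add (mul_le_mul_of_nonneg_left h1 ha)
        (mul_le_mul_of_nonneg_left h2 hb)
      simp only [smul_eq_mul] at *
      nlinarith [this, sq_nonneg a]
    · intro p hp y hy
      rcases hy with hy | hy
      · subst hy; simp only [hf, hg]; ring
      · simp only [Set.mem_singleton_iff] at hy
        subst hy; simp only [hf, hg]; ring
  · rintro ⟨f, g, _, hsup, hℓ, huni⟩
    intro p hp p' hp'
    have e1 : ℓ p' 1 = f p' + g p' * (1 - p') := hℓ p' hp' 1 (by right; rfl)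
    have e0 : ℓ p' 0 = f p' + g p' * (0 - p') := hℓ p' hp' 0 (by left; rfl)
    have hs := hsup p' hp' p hp
    have hfp := huni p hp
    have E : p * ℓ p' 1 + (1 - p) * ℓ p' 0 = f p' + g p' * (p - p') := by
      rw [e1, e0]; ring
    linarith [hs]
end

section
/- Let T ∈ ℕ, let Z ⊂ [0,1] be a finite set, let y : {1,…,T} → {0,1}, and let a : {1,…,T} × Z → ℝ≥0 be nonnegative weights. Let f : [0,1] → ℝ be concave with supergradient selection g (f(x) ≤ f(q) + g(q)·(x − q) for all x, q ∈ [0,1]), and define the proper loss ℓ(q, y) := f(q) + g(q)·(y − q) and Breg_{−f}(x, q) := f(q) + g(q)·(x − q) − f(x). For each p ∈ Z set N_p := Σ_{t=1}^T a(t,p) and, when N_p > 0, ρ_p := (Σ_{t=1}^T a(t,p)·y_t)/N_p (and ρ_p := 0 when N_p = 0). Then for every swap function σ : Z → [0,1], Σ_{p∈Z} Σ_{t=1}^T a(t,p)·(ℓ(p, y_t) − ℓ(σ(p), y_t)) = Σ_{p∈Z} N_p·(Breg_{−f}(ρ_p, p) − Breg_{−f}(ρ_p, σ(p))). (Taking a(t,p)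 = 1{p_t = p} gives the swap-regret decomposition; taking a(t,p) = 𝒫_t(p), the forecaster's conditional probability of predicting p at time t, gives the pseudo-swap-regret decomposition.) -/
/-- **Weighted swap-regret decomposition via Bregman divergences (Proposition 1).**
For a proper loss `ℓ(q,y) = f(q) + g(q)·(y − q)` with `f` concave and `g` a
supergradient selection, nonnegative weights `a`, binary labels `y`, and any swap
function `σ : Z → [0,1]`, the weighted swap regret decomposes as
`Σ_p N_p·(Breg_{−f}(ρ_p, p) − Breg_{−f}(ρ_p, σ(p)))`. -/
theorem weighted_swap_regret_decomposition
    (T : ℕ) (Z : Finset ℝ) (hZ : ∀ z ∈ Z, z ∈ Set.Icc (0:ℝ) 1)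
    (y : ℕ → ℝ) (hy : ∀ t, y t = 0 ∨ y t = 1)
    (a : ℕ → ℝ → ℝ) (ha : ∀ t p, 0 ≤ a t p)
    (f g : ℝ → ℝ)
    (hconc : ConcaveOn ℝ (Set.Icc (0:ℝ) 1) f)
    (hg : ∀ q ∈ Set.Icc (0:ℝ) 1, ∀ x ∈ Set.Icc (0:ℝ) 1, f x ≤ f q + g q * (x - q))
    (ℓ : ℝ → ℝ → ℝ) (hℓ : ∀ q y', ℓ q y' = f q + g q * (y' - q))
    (Breg : ℝ → ℝ → ℝ) (hBreg : ∀ x q, Breg x q = f q + g q * (x - q) - f x)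
    (N : ℝ → ℝ) (hN : ∀ p, N p = ∑ t ∈ Finset.range T, a t p)
    (ρ : ℝ → ℝ)
    (hρ : ∀ p, ρ p = if 0 < N p then (∑ t ∈ Finset.range T, a t p * y t) / N p else 0)
    (σ : ℝ → ℝ) (hσ : ∀ p ∈ Z, σ p ∈ Set.Icc (0:ℝ) 1) :
    ∑ p ∈ Z, ∑ t ∈ Finset.range T, a t p * (ℓ p (y t) - ℓ (σ p) (y t))
      = ∑ p ∈ Z, N p * (Breg (ρ p) p - Breg (ρ p) (σ p)) := by
  apply Finset.sum_congr rfl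
  intro p _
  set S := ∑ t ∈ Finset.range T, a t p * y t with hS
  have key : N p * ρ p = S := by
    rw [hρ p]
    by_cases h : 0 < N p
    · rw [if_pos h, mul_div_cancel₀ _ (ne_of_gt h)]
    · rw [if_neg h, mul_zero]
      have hN0 : N p = 0 := le_antisymm (not_lt.mp h)
        (by rw [hN]; exact Finset.sum_nonneg fun t _ => ha t p)
      have hall : ∀ t ∈ Finset.range T, a t p = 0 := by
        rw [hN] at hN0
        exact (Finset.sum_eq_zero_iff_of_nonneg fun t _ => ha t p).mp hN0
      symm
      exact Finset.sum_eq_zero fun t ht => by rw [hall t ht, zero_mul]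
  have lhs_eq : ∑ t ∈ Finset.range T, a t p * (ℓ p (y t) - ℓ (σ p) (y t))
      = (f p - g p * p - f (σ p) + g (σ p) * σ p) * N p + (g p - g (σ p)) * S := by
    rw [hN, hS, Finset.mul_sum, Finset.mul_sum, ← Finset.sum_add_distrib]
    apply Finset.sum_congr rfl
    intro t _
    rw [hℓ, hℓ]
    ring
  rw [lhs_eq, hBreg, hBreg, ← key]
  ring
end

section
/- In the setting of the weighted swap-regret decomposition (T ∈ ℕ, Z ⊂ [0,1] finite, y : {1,…,T} → {0,1}, nonnegative weights a : {1,…,T} × Z → ℝ≥0, f : [0,1] → ℝ concave with supergradient selection g, ℓ(q, y) = f(q) + g(q)·(y − q), Breg_{−f}(x, q) = f(q) + g(q)·(x − q) − f(x), N_p = Σ_t a(t,p), ρ_p = (Σ_t a(t,p)·y_t)/N_p when N_p > 0 and ρ_p = 0 otherwise), the supremum over all swap functions σ : Z → [0,1] of Σ_{p∈Z} Σ_{t=1}^T a(t,p)·(ℓ(p, y_t) − ℓ(σ(p), y_t)) equals Σ_{p∈Z} N_p·Breg_{−f}(ρ_p, p), and this supremum is attained by σ(p) = ρ_p. -/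
/-- **Supremum of the weighted swap regret (Proposition 1, supremum form).**
In the weighted swap-regret decomposition setting, the supremum over all swap
functions `σ : Z → [0,1]` of the weighted swap regret equals
`Σ_p N_p·Breg_{−f}(ρ_p, p)`, and it is attained by `σ(p) = ρ_p`. -/
theorem weighted_swap_regret_sup
    (T : ℕ) (Z : Finset ℝ) (hZ : ∀ z ∈ Z, z ∈ Set.Icc (0:ℝ) 1)
    (y : ℕ → ℝ) (hy : ∀ t, y t = 0 ∨ y t = 1)
    (a : ℕ → ℝ → ℝ) (ha : ∀ t p, 0 ≤ a t p)
    (f g : ℝ → ℝ)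
    (hconc : ConcaveOn ℝ (Set.Icc (0:ℝ) 1) f)
    (hg : ∀ q ∈ Set.Icc (0:ℝ) 1, ∀ x ∈ Set.Icc (0:ℝ) 1, f x ≤ f q + g q * (x - q))
    (ℓ : ℝ → ℝ → ℝ) (hℓ : ∀ q y', ℓ q y' = f q + g q * (y' - q))
    (Breg : ℝ → ℝ → ℝ) (hBreg : ∀ x q, Breg x q = f q + g q * (x - q) - f x)
    (N : ℝ → ℝ) (hN : ∀ p, N p = ∑ t ∈ Finset.range T, a t p)
    (ρ : ℝ → ℝ)
    (hρ : ∀ p, ρ p = if 0 < N p then (∑ t ∈ Finset.range T, a t p * y t) / N p else 0) :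
    IsGreatest
      {x : ℝ | ∃ σ : ℝ → ℝ, (∀ p ∈ Z, σ p ∈ Set.Icc (0:ℝ) 1) ∧
        x = ∑ p ∈ Z, ∑ t ∈ Finset.range T, a t p * (ℓ p (y t) - ℓ (σ p) (y t))}
      (∑ p ∈ Z, N p * Breg (ρ p) p) ∧
    ∑ p ∈ Z, ∑ t ∈ Finset.range T, a t p * (ℓ p (y t) - ℓ (ρ p) (y t))
      = ∑ p ∈ Z, N p * Breg (ρ p) p := by

  have hNnn : ∀ p, 0 ≤ N p := by
    intro p; rw [hN]; exact Finset.sum_nonneg fun t _ => ha t p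
  have hρmem : ∀ p, ρ p ∈ Set.Icc (0:ℝ) 1 := by
    intro p
    rw [hρ p]
    split_ifs with h
    · constructor
      · apply div_nonneg _ h.le
        refine Finset.sum_nonneg fun t _ => ?_
        rcases hy t with h0 | h1
        · simp [h0]
        · simpa [h1] using ha t p
      · rw [div_le_one h, hN]
        refine Finset.sum_le_sum fun t _ => ?_
        rcases hy t with h0 | h1
        · simp [h0, ha t p]
        · simp [h1]
    · exact ⟨le_rfl, zero_le_one⟩
  have hBself : ∀ p, Breg (ρ p) (ρ p) = 0 := by
    intro p; rw [hBreg]; ring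
  have hBnn : ∀ p, ∀ q ∈ Set.Icc (0:ℝ) 1, 0 ≤ Breg (ρ p) q := by
    intro p q hq
    rw [hBreg]
    have := hg q hq (ρ p) (hρmem p)
    linarith
  have key : ∀ p, ∀ q,
      ∑ t ∈ Finset.range T, a t p * (ℓ p (y t) - ℓ q (y t))
        = N p * (Breg (ρ p) p - Breg (ρ p) q) := by
    intro p q
    by_cases h : 0 < N p
    · have hNρ : N p * ρ p = ∑ t ∈ Finset.range T, a t p * y t := by
        rw [hρ p, if_pos h, mul_div_cancel₀ _ (ne_of_gt h)]
      have expand : ∀ t ∈ Finset.range T, a t p * (ℓ p (y t) - ℓ q (y t)) =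
          a t p * (f p - g p * p - f q + g q * q) + (a t p * y t) * (g p - g q) := by
        intro t _; rw [hℓ, hℓ]; ring
      rw [Finset.sum_congr rfl expand, Finset.sum_add_distrib,
        ← Finset.sum_mul, ← Finset.sum_mul, ← hN, ← hNρ, hBreg, hBreg]
      ring
    · have hN0 : N p = 0 := le_antisymm (not_lt.mp h) (hNnn p)
      have ha0 : ∀ t ∈ Finset.range T, a t p = 0 := by
        have := (Finset.sum_eq_zero_iff_of_nonneg (fun t _ => ha t p)).mp
          ((hN p).symm.trans hN0)
        exact this
      rw [hN0, zero_mul]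
      exact Finset.sum_eq_zero fun t ht => by rw [ha0 t ht, zero_mul]
  have hattain : ∑ p ∈ Z, ∑ t ∈ Finset.range T, a t p * (ℓ p (y t) - ℓ (ρ p) (y t))
      = ∑ p ∈ Z, N p * Breg (ρ p) p := by
    refine Finset.sum_congr rfl fun p _ => ?_
    rw [key p (ρ p), hBself p, sub_zero]
  refine ⟨⟨⟨ρ, fun p _ => hρmem p, hattain.symm⟩, ?_⟩, hattain⟩
  rintro x ⟨σ, hσ, rfl⟩
  refine Finset.sum_le_sum fun p hp => ?_
  rw [key p (σ p)]
  have := hBnn p (σ p) (hσ p hp)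
  have := hNnn p
  nlinarith
end

section
/- Let f : [0,1] → ℝ be concave on [0,1] and twice differentiable on (0,1), and suppose there exists c > 0 such that |f''(μ)| ≤ c·(1/μ + 1/(1−μ)) for all μ ∈ (0,1). Then for all p, p̂ ∈ (0,1), the Bregman divergence Breg_{−f}(p̂, p) := f(p) + f'(p)·(p̂ − p) − f(p̂) satisfies Breg_{−f}(p̂, p) ≤ c·KL(p̂, p), where KL(p̂, p) := p̂·log(p̂/p) + (1−p̂)·log((1−p̂)/(1−p)). -/
/-!
With `h x = c · KL(x, p) + f x`, the bound on `f''` gives `h'' = c (1/x + 1/(1-x)) + f'' ≥ 0`, so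
`h` is convex on `(0,1)` and lies above its tangent line at `p`. Since `KL(·, p)` vanishes together
with its derivative at `p`, that tangent line is `f p + f' p (x - p)`, and the inequality at `x = p̂`
is the claim.
-/

open Real Set

theorem ConvexOn.add_mul_sub_le_of_hasDerivAt {S : Set ℝ} {f : ℝ → ℝ} {f' x y : ℝ}
    (hfc : ConvexOn ℝ S f) (hx : x ∈ S) (hy : y ∈ S) (hf : HasDerivAt f f' x) :
    f x + f' * (y - x) ≤ f y := by
  rcases lt_trichotomy x y with hxy | rfl | hyx
  · have := hfc.le_slope_of_hasDerivAt hx hy hxy hf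
    rw [slope_def_field, le_div_iff₀ (sub_pos.2 hxy)] at this
    linarith
  · simp
  · have := hfc.slope_le_of_hasDerivAt hy hx hyx hf
    rw [slope_def_field, div_le_iff₀ (sub_pos.2 hyx)] at this
    linarith

noncomputable def bernoulliKL (q p : ℝ) : ℝ :=
  q * log (q / p) + (1 - q) * log ((1 - q) / (1 - p))

@[simp]
theorem bernoulliKL_self (p : ℝ) : bernoulliKL p p = 0 := by
  simp [bernoulliKL]

theorem hasDerivAt_log_div_const {p q : ℝ} (hp : p ≠ 0) (hq : q ≠ 0) :
    HasDerivAt (fun x => log (x / p)) (1 / q) q :=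
  (((hasDerivAt_id' q).div_const p).log (div_ne_zero hq hp)).congr_deriv (by field_simp)

theorem hasDerivAt_log_one_sub_div_const {p q : ℝ} (hp : p ≠ 1) (hq : q ≠ 1) :
    HasDerivAt (fun x => log ((1 - x) / (1 - p))) (-1 / (1 - q)) q :=
  ((((hasDerivAt_id' q).const_sub 1).div_const (1 - p)).log
    (div_ne_zero (sub_ne_zero.2 hq.symm) (sub_ne_zero.2 hp.symm))).congr_deriv <| by
      field_simp [sub_ne_zero.2 hq.symm]

theorem hasDerivAt_bernoulliKL {p q : ℝ} (hp₀ : p ≠ 0) (hp₁ : p ≠ 1) (hq : q ∈ Ioo 0 1) :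
    HasDerivAt (bernoulliKL · p) (log (q / p) - log ((1 - q) / (1 - p))) q := by
  have hq₀ : q ≠ 0 := hq.1.ne'
  have hq₁ : 1 - q ≠ 0 := sub_ne_zero.2 hq.2.ne'
  refine (((hasDerivAt_id' q).mul (hasDerivAt_log_div_const hp₀ hq₀)).add
    (((hasDerivAt_id' q).const_sub 1).mul
      (hasDerivAt_log_one_sub_div_const hp₁ hq.2.ne))).congr_deriv ?_
  field_simp
  ring

theorem hasDerivAt_deriv_bernoulliKL {p q : ℝ} (hp₀ : p ≠ 0) (hp₁ : p ≠ 1) (hq : q ∈ Ioo 0 1) :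
    HasDerivAt (fun x => log (x / p) - log ((1 - x) / (1 - p))) (1 / q + 1 / (1 - q)) q :=
  ((hasDerivAt_log_div_const hp₀ hq.1.ne').sub
    (hasDerivAt_log_one_sub_div_const hp₁ hq.2.ne)).congr_deriv (by ring)

theorem convexOn_const_mul_bernoulliKL_add {f f' f'' : ℝ → ℝ} {c p : ℝ} (hp : p ∈ Ioo 0 1)
    (hf' : ∀ x ∈ Ioo 0 1, HasDerivAt f (f' x) x) (hf'' : ∀ x ∈ Ioo 0 1, HasDerivAt f' (f'' x) x)
    (hf''_ge : ∀ x ∈ Ioo 0 1, -f'' x ≤ c * (1 / x + 1 / (1 - x))) :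
    ConvexOn ℝ (Ioo 0 1) (fun x => c * bernoulliKL x p + f x) := by
  have hp₀ : p ≠ 0 := hp.1.ne'
  have hp₁ : p ≠ 1 := hp.2.ne
  have hderiv : ∀ x ∈ Ioo (0 : ℝ) 1, HasDerivAt (fun x => c * bernoulliKL x p + f x)
      (c * (log (x / p) - log ((1 - x) / (1 - p))) + f' x) x := fun x hx =>
    ((hasDerivAt_bernoulliKL hp₀ hp₁ hx).const_mul c).add (hf' x hx)
  refine convexOn_of_hasDerivWithinAt2_nonneg (convex_Ioo 0 1)
    (f' := fun x => c * (log (x / p) - log ((1 - x) / (1 - p))) + f' x)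
    (f'' := fun x => c * (1 / x + 1 / (1 - x)) + f'' x)
    (fun x hx => (hderiv x hx).continuousAt.continuousWithinAt) ?_ ?_ ?_
  all_goals simp only [interior_Ioo]
  · exact fun x hx => (hderiv x hx).hasDerivWithinAt
  · exact fun x hx =>
      (((hasDerivAt_deriv_bernoulliKL hp₀ hp₁ hx).const_mul c).add (hf'' x hx)).hasDerivWithinAt
  · exact fun x hx => by linarith [hf''_ge x hx]

theorem breg_le_kl_general
    (f f' f'' : ℝ → ℝ)
    (hd1 : ∀ x ∈ Set.Ioo (0:ℝ) 1, HasDerivAt f (f' x) x)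
    (hd2 : ∀ x ∈ Set.Ioo (0:ℝ) 1, HasDerivAt f' (f'' x) x)
    (c : ℝ)
    (hbound : ∀ μ ∈ Set.Ioo (0:ℝ) 1, |f'' μ| ≤ c * (1 / μ + 1 / (1 - μ)))
    (p phat : ℝ) (hp : p ∈ Set.Ioo (0:ℝ) 1) (hphat : phat ∈ Set.Ioo (0:ℝ) 1) :
    f p + f' p * (phat - p) - f phat
      ≤ c * (phat * Real.log (phat / p)
              + (1 - phat) * Real.log ((1 - phat) / (1 - p))) := by
  have hconvex := convexOn_const_mul_bernoulliKL_add hp hd1 hd2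
    fun μ hμ => (neg_le_abs _).trans (hbound μ hμ)
  have htangent := hconvex.add_mul_sub_le_of_hasDerivAt hp hphat
    (((hasDerivAt_bernoulliKL hp.1.ne' hp.2.ne hp).const_mul c).add (hd1 p hp))
  simp only [bernoulliKL_self, div_self hp.1.ne', div_self (sub_ne_zero.2 hp.2.ne'), log_one,
    sub_self, mul_zero, zero_add] at htangent
  unfold bernoulliKL at htangent
  linarith

/-- **Bregman divergence bounded by KL (Proposition 2).**
If `f : [0,1] → ℝ` is concave, twice differentiable on `(0,1)`, and
`|f''(μ)| ≤ c·(1/μ + 1/(1−μ))` on `(0,1)`, then for all `p, p̂ ∈ (0,1)`,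
`Breg_{−f}(p̂, p) ≤ c·KL(p̂, p)`. -/
theorem breg_le_kl
    (f f' f'' : ℝ → ℝ)
    (hconc : ConcaveOn ℝ (Set.Icc (0:ℝ) 1) f)
    (hd1 : ∀ x ∈ Set.Ioo (0:ℝ) 1, HasDerivAt f (f' x) x)
    (hd2 : ∀ x ∈ Set.Ioo (0:ℝ) 1, HasDerivAt f' (f'' x) x)
    (c : ℝ) (hc : 0 < c)
    (hbound : ∀ μ ∈ Set.Ioo (0:ℝ) 1, |f'' μ| ≤ c * (1 / μ + 1 / (1 - μ)))
    (p phat : ℝ) (hp : p ∈ Set.Ioo (0:ℝ) 1) (hphat : phat ∈ Set.Ioo (0:ℝ) 1) :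
    f p + f' p * (phat - p) - f phat
      ≤ c * (phat * Real.log (phat / p)
              + (1 - phat) * Real.log ((1 - phat) / (1 - p))) :=
  breg_le_kl_general f f' f'' hd1 hd2 c hbound p phat hp hphat
end

section
/- There exists a constant C > 0 such that for every integer K ≥ 2 the points z_i := sin²(πi/(2K)) (with z_0 = 0 and z_K = 1) and gaps d_i := z_i − z_{i−1} satisfy, for every i ∈ {1, …, K−1}: max(d_i, d_{i+1})² / (z_i·(1 − z_i)) ≤ C/K². -/
/-!
With `r = π/(2K)` and `z_i = sin²(i r)`, the identity `sin² x - sin² y = sin(x + y) sin(x - y)` gives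
`d_i = sin(2ir - r) sin r` and `d_{i+1} = sin(2ir + r) sin r`, while `z_i (1 - z_i) = sin²(2ir)/4`.
Since `r ≤ 2ir ≤ π - r` we have `sin r ≤ sin(2ir)`, so both gaps are at most `2 r sin(2ir)` in
absolute value, and `max(d_i, d_{i+1})² ≤ 16 r² z_i (1 - z_i) = (4π²/K²) z_i (1 - z_i)`.
-/

open Real

/-- The non-uniform discretization point `z_i = sin²(πi/(2K))`. -/
noncomputable def zpt (K i : ℕ) : ℝ := Real.sin (π * i / (2 * K)) ^ 2

lemma sin_sq_sub_sin_sq (x y : ℝ) : sin x ^ 2 - sin y ^ 2 = sin (x + y) * sin (x - y) := by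
  rw [sin_add, sin_sub]
  nlinarith [sin_sq_add_cos_sq x, sin_sq_add_cos_sq y]

lemma sin_sq_mul_one_sub_sin_sq (x : ℝ) : sin x ^ 2 * (1 - sin x ^ 2) = sin (2 * x) ^ 2 / 4 := by
  rw [sin_two_mul, ← cos_sq']
  ring

lemma abs_sin_add_le (x y : ℝ) : |sin (x + y)| ≤ |sin x| + |sin y| := by
  rw [sin_add]
  refine (abs_add_le _ _).trans ?_
  rw [abs_mul, abs_mul]
  gcongr
  · exact mul_le_of_le_one_right (abs_nonneg _) (abs_cos_le_one y)
  · exact mul_le_of_le_one_left (abs_nonneg _) (abs_cos_le_one x)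

lemma sin_le_sin_of_le_of_le_pi_sub {r θ : ℝ} (hr : 0 ≤ r) (hrθ : r ≤ θ) (hθ : θ ≤ π - r) :
    sin r ≤ sin θ := by
  rcases le_total θ (π / 2) with h | h
  · exact sin_le_sin_of_le_of_le_pi_div_two (by linarith) h hrθ
  · rw [← sin_pi_sub θ]
    exact sin_le_sin_of_le_of_le_pi_div_two (by linarith) (by linarith) (by linarith)

lemma abs_sin_add_mul_sin_le {r θ s : ℝ} (hr : 0 ≤ r) (hrθ : r ≤ θ) (hθ : θ ≤ π - r)
    (hs : |sin s| ≤ sin r) : |sin (θ + s) * sin r| ≤ 2 * r * sin θ := by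
  have hsin : sin r ≤ sin θ := sin_le_sin_of_le_of_le_pi_sub hr hrθ hθ
  have hsin_r : 0 ≤ sin r := sin_nonneg_of_nonneg_of_le_pi hr (by linarith)
  have hsin_add : |sin (θ + s)| ≤ 2 * sin θ := by
    have := abs_sin_add_le θ s
    rw [abs_of_nonneg (hsin_r.trans hsin)] at this
    linarith
  have hsin_le : |sin r| ≤ r := by simpa [abs_of_nonneg hr] using abs_sin_le_abs (x := r)
  calc |sin (θ + s) * sin r| = |sin (θ + s)| * |sin r| := abs_mul _ _
    _ ≤ 2 * sin θ * r := mul_le_mul hsin_add hsin_le (abs_nonneg _) (by linarith)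
    _ = 2 * r * sin θ := by ring

lemma max_sin_sq_gap_sq_le {a r : ℝ} (hr : 0 ≤ r) (hra : r ≤ 2 * a) (haπ : 2 * a ≤ π - r) :
    max (sin a ^ 2 - sin (a - r) ^ 2) (sin (a + r) ^ 2 - sin a ^ 2) ^ 2
      ≤ 16 * r ^ 2 * (sin a ^ 2 * (1 - sin a ^ 2)) := by
  have habs_sin_r : |sin r| ≤ sin r :=
    (abs_of_nonneg (sin_nonneg_of_nonneg_of_le_pi hr (by linarith))).le
  have hprev : |sin a ^ 2 - sin (a - r) ^ 2| ≤ 2 * r * sin (2 * a) := by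
    rw [sin_sq_sub_sin_sq, show a + (a - r) = 2 * a + -r by ring, show a - (a - r) = r by ring]
    exact abs_sin_add_mul_sin_le hr hra haπ (by rwa [sin_neg, abs_neg])
  have hnext : |sin (a + r) ^ 2 - sin a ^ 2| ≤ 2 * r * sin (2 * a) := by
    rw [sin_sq_sub_sin_sq, show a + r + a = 2 * a + r by ring, show a + r - a = r by ring]
    exact abs_sin_add_mul_sin_le hr hra haπ habs_sin_r
  obtain ⟨hlower, hupper⟩ := abs_le.1 (abs_max_le_max_abs_abs.trans (max_le hprev hnext))
  calc max (sin a ^ 2 - sin (a - r) ^ 2) (sin (a + r) ^ 2 - sin a ^ 2) ^ 2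
      ≤ (2 * r * sin (2 * a)) ^ 2 := sq_le_sq' hlower hupper
    _ = 16 * r ^ 2 * (sin a ^ 2 * (1 - sin a ^ 2)) := by
        rw [sin_sq_mul_one_sub_sin_sq]; ring

/-- **Gap-to-variance bound for the sin² discretization (Lemma 4(b)).**
There is a universal constant `C > 0` such that for all `K ≥ 2` and `1 ≤ i ≤ K−1`,
`max(d_i, d_{i+1})² / (z_i(1 − z_i)) ≤ C/K²`, where `d_i = z_i − z_{i−1}`. -/
theorem sinsq_discretization_gap_sq_div_var :
    ∃ C > 0, ∀ K : ℕ, 2 ≤ K → ∀ i : ℕ, 1 ≤ i → i ≤ K - 1 →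
      (max (zpt K i - zpt K (i - 1)) (zpt K (i + 1) - zpt K i)) ^ 2
        / (zpt K i * (1 - zpt K i)) ≤ C / (K : ℝ) ^ 2 := by
  refine ⟨4 * π ^ 2, by positivity, fun K _ i hi hiK => ?_⟩
  set r := π / (2 * K) with hr
  have hK : (0 : ℝ) < K := by exact_mod_cast (by omega : 0 < K)
  have hi' : (1 : ℝ) ≤ i := by exact_mod_cast hi
  have hiK' : (i : ℝ) + 1 ≤ K := by exact_mod_cast (by omega : i + 1 ≤ K)
  have hz : ∀ n : ℕ, zpt K n = sin (n * r) ^ 2 := fun n => by rw [zpt, hr]; ring_nf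
  have hprev : zpt K (i - 1) = sin (i * r - r) ^ 2 := by
    rw [hz, Nat.cast_sub hi]; ring_nf
  have hnext : zpt K (i + 1) = sin (i * r + r) ^ 2 := by
    rw [hz]; push_cast; ring_nf
  rw [hprev, hnext, hz]
  refine div_le_of_le_mul₀ ?_ (by positivity) ?_
  · exact mul_nonneg (sq_nonneg _) (sub_nonneg.2 (sin_sq_le_one _))
  have hr0 : 0 < r := by positivity
  have hrK : r * K = π / 2 := by rw [hr]; field_simp
  calc _ ≤ 16 * r ^ 2 * (sin (i * r) ^ 2 * (1 - sin (i * r) ^ 2)) :=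
        max_sin_sq_gap_sq_le hr0.le (by nlinarith) (by nlinarith)
    _ = 4 * π ^ 2 / K ^ 2 * (sin (i * r) ^ 2 * (1 - sin (i * r) ^ 2)) := by
        rw [hr]; field_simp; ring
end

section
/- Let 0 < p⁻ ≤ p < p⁺ < 1 and let q be the random variable taking value p⁻ with probability ((p⁺ − p)/(p⁺(1 − p⁺)))/D and value p⁺ with probability ((p − p⁻)/(p⁻(1 − p⁻)))/D, where D := (p⁺ − p)/(p⁺(1 − p⁺)) + (p − p⁻)/(p⁻(1 − p⁻)). Then for the log loss ℓ(q, y) := −y·log q − (1 − y)·log(1 − q) and for every y ∈ {0,1}, E[ℓ(q, y)] − ℓ(p, y) ≤ (p⁺ − p⁻)²·max(1/(p⁻(1 − p⁻)), 1/(p⁺(1 − p⁺))). -/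
/-!
For `y ∈ {0,1}` the map `q ↦ ℓ(q, y)` is convex with slope `(q - y) / (q (1 - q))`, so the
tangent line at `q` gives `ℓ(q, y) - ℓ(p, y) ≤ (q - p)(q - y) / (q (1 - q))`. With
`a = (p⁺ - p) / (p⁺(1 - p⁺))` and `b = (p - p⁻) / (p⁻(1 - p⁻))` the rounding weights are
`a / (a + b)` and `b / (a + b)`, chosen so that the `y`-dependent parts of the two tangent
bounds cancel: the expected excess loss is at most `a b (p⁺ - p⁻) / (a + b) ≤ b (p⁺ - p⁻)`,
and `b ≤ (p⁺ - p⁻) / (p⁻(1 - p⁻))`.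
-/

open Real Set

noncomputable def logLoss (q y : ℝ) : ℝ := -y * log q - (1 - y) * log (1 - q)

lemma log_sub_log_le_div {x z : ℝ} (hx : 0 < x) (hz : 0 < z) :
    log x - log z ≤ (x - z) / z := by
  have h := log_le_sub_one_of_pos (div_pos hx hz)
  rwa [log_div hx.ne' hz.ne', div_sub_one hz.ne'] at h

lemma logLoss_sub_logLoss_le {p q y : ℝ} (hp : p ∈ Ioo (0 : ℝ) 1) (hq : q ∈ Ioo (0 : ℝ) 1)
    (hy : y = 0 ∨ y = 1) :
    logLoss q y - logLoss p y ≤ (q - p) * (q - y) / (q * (1 - q)) := by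
  obtain ⟨hp0, hp1⟩ := hp
  obtain ⟨hq0, hq1⟩ := hq
  have hq1' : 1 - q ≠ 0 := (sub_pos.2 hq1).ne'
  rcases hy with rfl | rfl
  · have h := log_sub_log_le_div (sub_pos.2 hp1) (sub_pos.2 hq1)
    calc logLoss q 0 - logLoss p 0 = log (1 - p) - log (1 - q) := by simp only [logLoss]; ring
      _ ≤ (1 - p - (1 - q)) / (1 - q) := h
      _ = (q - p) * (q - 0) / (q * (1 - q)) := by field_simp; ring
  · have h := log_sub_log_le_div hp0 hq0
    calc logLoss q 1 - logLoss p 1 = log p - log q := by simp only [logLoss]; ring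
      _ ≤ (p - q) / q := h
      _ = (q - p) * (q - 1) / (q * (1 - q)) := by field_simp; ring

lemma rounding_tangent_terms_eq (pm p pp y : ℝ) :
    (pp - p) / (pp * (1 - pp)) * ((pm - p) * (pm - y) / (pm * (1 - pm)))
      + (p - pm) / (pm * (1 - pm)) * ((pp - p) * (pp - y) / (pp * (1 - pp)))
    = (pp - p) / (pp * (1 - pp)) * ((p - pm) / (pm * (1 - pm))) * (pp - pm) := by
  ring

lemma mul_div_add_le_right {a b : ℝ} (hb : 0 ≤ b) (hab : 0 < a + b) :
    a * b / (a + b) ≤ b := by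
  rw [div_le_iff₀ hab]
  nlinarith

/-- **Randomized rounding for the log loss (Lemma 6).**
Let `0 < p⁻ ≤ p < p⁺ < 1` and let `q` take value `p⁻` with probability
`((p⁺ − p)/(p⁺(1 − p⁺)))/D` and `p⁺` with probability `((p − p⁻)/(p⁻(1 − p⁻)))/D`.
Then for the log loss and every `y ∈ {0,1}`,
`E[ℓ(q, y)] − ℓ(p, y) ≤ (p⁺ − p⁻)²·max(1/(p⁻(1 − p⁻)), 1/(p⁺(1 − p⁺)))`. -/
theorem randomized_rounding_log_loss
    (pm p pp : ℝ) (h0 : 0 < pm) (h1 : pm ≤ p) (h2 : p < pp) (h3 : pp < 1)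
    (D : ℝ) (hD : D = (pp - p) / (pp * (1 - pp)) + (p - pm) / (pm * (1 - pm)))
    (ℓ : ℝ → ℝ → ℝ)
    (hℓ : ∀ q y, ℓ q y = -y * Real.log q - (1 - y) * Real.log (1 - q))
    (y : ℝ) (hy : y = 0 ∨ y = 1) :
    ((pp - p) / (pp * (1 - pp)) / D) * ℓ pm y
      + ((p - pm) / (pm * (1 - pm)) / D) * ℓ pp y - ℓ p y
    ≤ (pp - pm) ^ 2 * max (1 / (pm * (1 - pm))) (1 / (pp * (1 - pp))) := by
  obtain rfl : ℓ = logLoss := funext₂ hℓ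
  have hpm : pm ∈ Ioo (0 : ℝ) 1 := ⟨h0, by linarith⟩
  have hp : p ∈ Ioo (0 : ℝ) 1 := ⟨by linarith, by linarith⟩
  have hpp : pp ∈ Ioo (0 : ℝ) 1 := ⟨by linarith, h3⟩
  have hmpm : 0 < pm * (1 - pm) := mul_pos hpm.1 (sub_pos.2 hpm.2)
  have ha : 0 < (pp - p) / (pp * (1 - pp)) := div_pos (by linarith) (mul_pos hpp.1 (by linarith))
  have hb : 0 ≤ (p - pm) / (pm * (1 - pm)) := div_nonneg (by linarith) hmpm.le
  set a := (pp - p) / (pp * (1 - pp))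
  set b := (p - pm) / (pm * (1 - pm))
  subst hD
  have hab : 0 < a + b := by linarith
  calc a / (a + b) * logLoss pm y + b / (a + b) * logLoss pp y - logLoss p y
      = (a * (logLoss pm y - logLoss p y) + b * (logLoss pp y - logLoss p y)) / (a + b) := by
        field_simp; ring
    _ ≤ (a * ((pm - p) * (pm - y) / (pm * (1 - pm)))
          + b * ((pp - p) * (pp - y) / (pp * (1 - pp)))) / (a + b) := by
        gcongr
        exacts [logLoss_sub_logLoss_le hp hpm hy, logLoss_sub_logLoss_le hp hpp hy]
    _ = a * b / (a + b) * (pp - pm) := by rw [rounding_tangent_terms_eq]; ring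
    _ ≤ b * (pp - pm) := by
        gcongr
        · linarith
        · exact mul_div_add_le_right hb hab
    _ ≤ (pp - pm) / (pm * (1 - pm)) * (pp - pm) := by
        gcongr
        · linarith
        · exact div_le_div_of_nonneg_right (by linarith) hmpm.le
    _ ≤ (pp - pm) ^ 2 * max (1 / (pm * (1 - pm))) (1 / (pp * (1 - pp))) := by
        rw [div_mul_eq_mul_div, ← sq, ← mul_one_div]
        gcongr
        exact le_max_left _ _
end

section
/- Let 0 < p⁻ ≤ p < p⁺ < 1 and let q be the random variable taking value p⁻ with probability ((p⁺ − p)/(p⁺(1 − p⁺)))/D and value p⁺ with probability ((p − p⁻)/(p⁻(1 − p⁻)))/D, where D := (p⁺ − p)/(p⁺(1 − p⁺)) + (p − p⁻)/(p⁻(1 − p⁻)). Then E[p/q] − 1 = E[(1−p)/(1−q)] − 1 = (p⁺ − p)·(p − p⁻) / (p + p⁻p⁺ − p·(p⁻ + p⁺)), and moreover min(p⁻(1 − p⁻), p⁺(1 − p⁺)) ≤ p + p⁻p⁺ − p·(p⁻ + p⁺) ≤ max(p⁻(1 − p⁻), p⁺(1 − p⁺)). -/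
/-!
With `E = p + p⁻p⁺ − p(p⁻ + p⁺)`, the normalizer is
`D = E (p⁺ − p⁻) / (p⁻(1 − p⁻) p⁺(1 − p⁺))`, after which the first identity is a rational-function
identity. The reflection `q ↦ 1 − q`, `p ↦ 1 − p` swaps the two rounding points together with
their weights and leaves `E` and `(p⁺ − p)(p − p⁻)` unchanged, so it turns the first identity
into the second. Finally `E` is affine in `p` with values `p⁻(1 − p⁻)` at `p⁻` and `p⁺(1 − p⁺)`
at `p⁺`, so it lies between them.
-/

open Set

theorem rounding_denom_mem_uIcc {a b p : ℝ} (hp : p ∈ uIcc a b) :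
    p + a * b - p * (a + b) ∈ uIcc (a * (1 - a)) (b * (1 - b)) := by
  have h := mem_image_of_mem (fun x ↦ x * (1 - a - b) + a * b) hp
  rw [← image_image (· + a * b) (· * (1 - a - b)), image_mul_const_uIcc,
    image_add_const_uIcc] at h
  ring_nf at h ⊢
  exact h

theorem rounding_weight_sum_eq {a b p : ℝ} (ha : a ≠ 0) (ha1 : 1 - a ≠ 0) (hb : b ≠ 0)
    (hb1 : 1 - b ≠ 0) :
    (b - p) / (b * (1 - b)) + (p - a) / (a * (1 - a))
      = (p + a * b - p * (a + b)) * (b - a) / (a * (1 - a) * (b * (1 - b))) := by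
  field_simp
  ring

theorem rounding_expect_div_sub_one {a b p : ℝ} (ha : a ≠ 0) (ha1 : 1 - a ≠ 0) (hb : b ≠ 0)
    (hb1 : 1 - b ≠ 0) (hab : b - a ≠ 0) (hE : p + a * b - p * (a + b) ≠ 0)
    (D : ℝ) (hD : D = (b - p) / (b * (1 - b)) + (p - a) / (a * (1 - a))) :
    ((b - p) / (b * (1 - b)) / D) * (p / a) + ((p - a) / (a * (1 - a)) / D) * (p / b) - 1
      = (b - p) * (p - a) / (p + a * b - p * (a + b)) := by
  rw [hD, rounding_weight_sum_eq ha ha1 hb hb1]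
  -- an atom `E` lets `field_simp` cancel it using `hE`
  generalize hE' : p + a * b - p * (a + b) = E at hE ⊢
  field_simp
  rw [← hE']
  ring

/-- **Exact expectation identity for the randomized rounding scheme.**
With `q` taking value `p⁻` with probability `((p⁺ − p)/(p⁺(1 − p⁺)))/D` and `p⁺`
with probability `((p − p⁻)/(p⁻(1 − p⁻)))/D`, one has
`E[p/q] − 1 = E[(1−p)/(1−q)] − 1 = (p⁺ − p)(p − p⁻)/(p + p⁻p⁺ − p(p⁻ + p⁺))`,
and `p + p⁻p⁺ − p(p⁻ + p⁺)` lies between `min` and `max` of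
`p⁻(1 − p⁻)` and `p⁺(1 − p⁺)`. -/
theorem randomized_rounding_expectation_identity
    (pm p pp : ℝ) (h0 : 0 < pm) (h1 : pm ≤ p) (h2 : p < pp) (h3 : pp < 1)
    (D : ℝ) (hD : D = (pp - p) / (pp * (1 - pp)) + (p - pm) / (pm * (1 - pm))) :
    ((pp - p) / (pp * (1 - pp)) / D) * (p / pm)
        + ((p - pm) / (pm * (1 - pm)) / D) * (p / pp) - 1
      = (pp - p) * (p - pm) / (p + pm * pp - p * (pm + pp)) ∧
    ((pp - p) / (pp * (1 - pp)) / D) * ((1 - p) / (1 - pm))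
        + ((p - pm) / (pm * (1 - pm)) / D) * ((1 - p) / (1 - pp)) - 1
      = (pp - p) * (p - pm) / (p + pm * pp - p * (pm + pp)) ∧
    min (pm * (1 - pm)) (pp * (1 - pp)) ≤ p + pm * pp - p * (pm + pp) ∧
    p + pm * pp - p * (pm + pp) ≤ max (pm * (1 - pm)) (pp * (1 - pp)) := by
  obtain ⟨hmin, hmax⟩ := rounding_denom_mem_uIcc (mem_uIcc_of_le h1 h2.le)
  have hE : 0 < p + pm * pp - p * (pm + pp) :=
    (lt_min (by nlinarith) (by nlinarith)).trans_le hmin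
  have hpm : pm ≠ 0 := h0.ne'
  have hpm1 : 1 - pm ≠ 0 := by linarith
  have hpp : pp ≠ 0 := by linarith
  have hpp1 : 1 - pp ≠ 0 := by linarith
  have hppm : pp - pm ≠ 0 := by linarith
  refine ⟨rounding_expect_div_sub_one hpm hpm1 hpp hpp1 hppm hE.ne' D hD, ?_, hmin, hmax⟩
  have reflected := rounding_expect_div_sub_one (a := 1 - pp) (b := 1 - pm) (p := 1 - p)
    hpp1 (by simpa) hpm1 (by simpa) (by linarith) (by linarith) D (by rw [hD]; ring)
  linear_combination reflected
end

section
/- Let T ∈ ℕ, let Z ⊂ [0,1] be a finite set, let y : {1,…,T} → {0,1}, and let P : {1,…,T} × Z → ℝ≥0 satisfy Σ_{z∈Z} P(t, z) = 1 for every t; define ρ̃_z := (Σ_t P(t,z)·y_t)/(Σ_t P(t,z)) when Σ_t P(t,z) > 0 and ρ̃_z := 0 otherwise. Let f : [0,1] → ℝ be concave with supergradient selection g (f(x) ≤ f(q) + g(q)·(x − q) for all x, q ∈ [0,1]), let ℓ(q, y) := f(q) + g(q)·(y − q), and assume ℓ(q, y) ∈ [−1, 1] for all q ∈ [0,1], y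 ∈ {0,1}. Then for every swap function σ : Z → [0,1], Σ_{z∈Z} Σ_{t=1}^T P(t,z)·(ℓ(z, y_t) − ℓ(σ(z), y_t)) ≤ 4·Σ_{z∈Z} Σ_{t=1}^T P(t,z)·|z − ρ̃_z|; that is, the pseudo swap regret of any bounded proper loss is at most 4 times the pseudo ℓ₁-calibration error. -/
/-! Since `ℓ(q, ·)` is affine, averaging over the rounds `t` with prediction `z` replaces the
outcomes `y_t` by their empirical mean `ρ̃_z`, so the regret at `z` is
`(Σ_t P(t,z)) · (ℓ(z, ρ̃_z) − ℓ(σ z, ρ̃_z))`. The supergradient inequality at `σ z` gives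
`ℓ(σ z, ρ̃_z) ≥ f(ρ̃_z)`, and at `ρ̃_z` it gives `f(z) ≤ f(ρ̃_z) + g(ρ̃_z)(z − ρ̃_z)`; hence the
difference is at most `(g z − g ρ̃_z)(ρ̃_z − z) ≤ 4 |z − ρ̃_z|`, because `|g| ≤ 2`. -/

open Finset

def properLoss (f g : ℝ → ℝ) (q y : ℝ) : ℝ := f q + g q * (y - q)

noncomputable def weightedMean {ι : Type*} (s : Finset ι) (w x : ι → ℝ) : ℝ :=
  if 0 < ∑ i ∈ s, w i then (∑ i ∈ s, w i * x i) / ∑ i ∈ s, w i else 0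

section WeightedMean

variable {ι : Type*} {s : Finset ι} {w x : ι → ℝ}

theorem sum_mul_weightedMean (hw : ∀ i ∈ s, 0 ≤ w i) :
    (∑ i ∈ s, w i) * weightedMean s w x = ∑ i ∈ s, w i * x i := by
  unfold weightedMean
  split_ifs with hpos
  · exact mul_div_cancel₀ _ hpos.ne'
  · have hzero : ∀ i ∈ s, w i = 0 :=
      (sum_eq_zero_iff_of_nonneg hw).mp (le_antisymm (not_lt.mp hpos) (sum_nonneg hw))
    simp [sum_eq_zero fun i hi => (by rw [hzero i hi, zero_mul] : w i * x i = 0)]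

theorem weightedMean_mem_Icc (hw : ∀ i ∈ s, 0 ≤ w i) (hx : ∀ i ∈ s, x i ∈ Set.Icc (0 : ℝ) 1) :
    weightedMean s w x ∈ Set.Icc (0 : ℝ) 1 := by
  unfold weightedMean
  split_ifs with hpos
  · refine ⟨div_nonneg (sum_nonneg fun i hi => ?_) hpos.le, (div_le_one hpos).mpr ?_⟩
    · exact mul_nonneg (hw i hi) (hx i hi).1
    · exact sum_le_sum fun i hi => mul_le_of_le_one_right (hw i hi) (hx i hi).2
  · exact ⟨le_rfl, zero_le_one⟩

end WeightedMean

section ProperLoss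

variable {f g : ℝ → ℝ}

theorem sum_mul_properLoss {ι : Type*} {s : Finset ι} {w x : ι → ℝ} {m : ℝ}
    (hm : ∑ i ∈ s, w i * x i = (∑ i ∈ s, w i) * m) (q : ℝ) :
    ∑ i ∈ s, w i * properLoss f g q (x i) = (∑ i ∈ s, w i) * properLoss f g q m := by
  have h : ∀ i ∈ s, w i * properLoss f g q (x i) = (f q - g q * q) * w i + g q * (w i * x i) :=
    fun i _ => by unfold properLoss; ring
  rw [sum_congr rfl h, sum_add_distrib, ← mul_sum, ← mul_sum, hm]
  unfold properLoss
  ring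

theorem abs_le_two_of_properLoss_mem_Icc {q : ℝ}
    (hbdd : ∀ y ∈ ({0, 1} : Set ℝ), properLoss f g q y ∈ Set.Icc (-1 : ℝ) 1) : |g q| ≤ 2 := by
  have h₁ := hbdd 1 (by simp)
  have h₀ := hbdd 0 (by simp)
  have hg : g q = properLoss f g q 1 - properLoss f g q 0 := by unfold properLoss; ring
  rw [hg, abs_le]
  constructor <;> linarith [h₁.1, h₁.2, h₀.1, h₀.2]

/-- The right-hand side is the symmetrised Bregman divergence of `f` between `z` and `ρ`. -/
theorem properLoss_sub_properLoss_le {s : Set ℝ}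
    (hg : ∀ q ∈ s, ∀ x ∈ s, f x ≤ f q + g q * (x - q)) {z q ρ : ℝ}
    (hz : z ∈ s) (hq : q ∈ s) (hρ : ρ ∈ s) :
    properLoss f g z ρ - properLoss f g q ρ ≤ (g z - g ρ) * (ρ - z) := by
  have hqρ := hg q hq ρ hρ
  have hρz := hg ρ hρ z hz
  unfold properLoss
  linarith

end ProperLoss

theorem pseudo_swap_regret_le_four_pcal_one_general
    (T : ℕ) (Z : Finset ℝ) (hZ : ∀ z ∈ Z, z ∈ Set.Icc (0:ℝ) 1)
    (y : ℕ → ℝ) (hy : ∀ t, y t = 0 ∨ y t = 1)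
    (P : ℕ → ℝ → ℝ) (hP0 : ∀ t z, 0 ≤ P t z)
    (ρ : ℝ → ℝ)
    (hρ : ∀ z, ρ z = if 0 < ∑ t ∈ Finset.range T, P t z then
        (∑ t ∈ Finset.range T, P t z * y t) / (∑ t ∈ Finset.range T, P t z) else 0)
    (f g : ℝ → ℝ)
    (hg : ∀ q ∈ Set.Icc (0:ℝ) 1, ∀ x ∈ Set.Icc (0:ℝ) 1, f x ≤ f q + g q * (x - q))
    (ℓ : ℝ → ℝ → ℝ) (hℓ : ∀ q y', ℓ q y' = f q + g q * (y' - q))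
    (hbdd : ∀ q ∈ Set.Icc (0:ℝ) 1, ∀ y' ∈ ({0, 1} : Set ℝ), ℓ q y' ∈ Set.Icc (-1:ℝ) 1)
    (σ : ℝ → ℝ) (hσ : ∀ z ∈ Z, σ z ∈ Set.Icc (0:ℝ) 1) :
    ∑ z ∈ Z, ∑ t ∈ Finset.range T, P t z * (ℓ z (y t) - ℓ (σ z) (y t))
      ≤ 4 * ∑ z ∈ Z, ∑ t ∈ Finset.range T, P t z * |z - ρ z| := by
  obtain rfl : ℓ = properLoss f g := funext₂ hℓ
  have hgbd : ∀ q ∈ Set.Icc (0:ℝ) 1, |g q| ≤ 2 := fun q hq =>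
    abs_le_two_of_properLoss_mem_Icc (hbdd q hq)
  rw [mul_sum]
  refine sum_le_sum fun z hz => ?_
  have hρz : ρ z = weightedMean (range T) (P · z) y := hρ z
  have hmean : ∑ t ∈ range T, P t z * y t = (∑ t ∈ range T, P t z) * ρ z :=
    hρz ▸ (sum_mul_weightedMean fun t _ => hP0 t z).symm
  have hρI : ρ z ∈ Set.Icc (0:ℝ) 1 := hρz ▸ weightedMean_mem_Icc (fun t _ => hP0 t z)
    fun t _ => by rcases hy t with h | h <;> simp [h]
  have hpoint : properLoss f g z (ρ z) - properLoss f g (σ z) (ρ z) ≤ 4 * |z - ρ z| :=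
    calc _ ≤ (g z - g (ρ z)) * (ρ z - z) :=
          properLoss_sub_properLoss_le hg (hZ z hz) (hσ z hz) hρI
      _ ≤ |g z - g (ρ z)| * |z - ρ z| := by rw [abs_sub_comm z, ← abs_mul]; exact le_abs_self _
      _ ≤ 4 * |z - ρ z| := by
          gcongr
          linarith [abs_sub (g z) (g (ρ z)), hgbd z (hZ z hz), hgbd (ρ z) hρI]
  have hS : 0 ≤ ∑ t ∈ range T, P t z := sum_nonneg fun t _ => hP0 t z
  simp only [mul_sub, sum_sub_distrib, sum_mul_properLoss hmean, ← sum_mul]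
  linarith [mul_le_mul_of_nonneg_left hpoint hS]

/-- **Pseudo swap regret of a bounded proper loss is at most 4·PCal₁.**
For a proper loss `ℓ(q,y) = f(q) + g(q)·(y − q)` with `f` concave, `g` a
supergradient selection, and `ℓ(q,y) ∈ [−1,1]`, the pseudo swap regret against any
swap function `σ : Z → [0,1]` is at most `4·Σ_z Σ_t P(t,z)·|z − ρ̃_z|`. -/
theorem pseudo_swap_regret_le_four_pcal_one
    (T : ℕ) (Z : Finset ℝ) (hZ : ∀ z ∈ Z, z ∈ Set.Icc (0:ℝ) 1)
    (y : ℕ → ℝ) (hy : ∀ t, y t = 0 ∨ y t = 1)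
    (P : ℕ → ℝ → ℝ) (hP0 : ∀ t z, 0 ≤ P t z)
    (hP1 : ∀ t ∈ Finset.range T, ∑ z ∈ Z, P t z = 1)
    (ρ : ℝ → ℝ)
    (hρ : ∀ z, ρ z = if 0 < ∑ t ∈ Finset.range T, P t z then
        (∑ t ∈ Finset.range T, P t z * y t) / (∑ t ∈ Finset.range T, P t z) else 0)
    (f g : ℝ → ℝ)
    (hconc : ConcaveOn ℝ (Set.Icc (0:ℝ) 1) f)
    (hg : ∀ q ∈ Set.Icc (0:ℝ) 1, ∀ x ∈ Set.Icc (0:ℝ) 1, f x ≤ f q + g q * (x - q))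
    (ℓ : ℝ → ℝ → ℝ) (hℓ : ∀ q y', ℓ q y' = f q + g q * (y' - q))
    (hbdd : ∀ q ∈ Set.Icc (0:ℝ) 1, ∀ y' ∈ ({0, 1} : Set ℝ), ℓ q y' ∈ Set.Icc (-1:ℝ) 1)
    (σ : ℝ → ℝ) (hσ : ∀ z ∈ Z, σ z ∈ Set.Icc (0:ℝ) 1) :
    ∑ z ∈ Z, ∑ t ∈ Finset.range T, P t z * (ℓ z (y t) - ℓ (σ z) (y t))
      ≤ 4 * ∑ z ∈ Z, ∑ t ∈ Finset.range T, P t z * |z - ρ z| :=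
  pseudo_swap_regret_le_four_pcal_one_general T Z hZ y hy P hP0 ρ hρ f g hg ℓ hℓ hbdd σ hσ
end
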